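/- A minimum-vertex counterexample to the inequality fvs ≤ 2·cp among subcubic planar multigraphs is 2-edge-connected (has no bridge). -/

import Mathlib

/- A multigraph on vertex type `V` is represented by its multiset of edges,
   each edge being an unordered pair (`Sym2 V`); loops are `s(v, v)` and
   parallel edges are repeated elements of the multiset. -/

open Classical

namespace MG

variable {V : Type*}

/-- Degree of a vertex (a loop counts twice). -/
noncomputable def deg (G : Multiset (Sym2 V)) (v : V) : ℕ :=
  (G.map fun e => if e = s(v, v) then 2 else if v ∈ e then 1 else 0).sum

/-- The vertices touched by some edge. -/
def support (G : Multiset (Sym2 V)) : Set V := {v | ∃ e ∈ G, v ∈ e}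

/-- Adjacency. -/
def Adj (G : Multiset (Sym2 V)) (a b : V) : Prop := s(a, b) ∈ G

/-- Reachability. -/
def Reach (G : Multiset (Sym2 V)) : V → V → Prop := Relation.ReflTransGen (Adj G)

/-- Connectedness (of the non-isolated vertices). -/
def Conn (G : Multiset (Sym2 V)) : Prop :=
  (support G).Nonempty ∧ ∀ a ∈ support G, ∀ b ∈ support G, Reach G a b

/-- A multigraph is a cycle iff it is nonempty, connected and 2-regular. -/
def IsCycle (C : Multiset (Sym2 V)) : Prop :=
  C ≠ 0 ∧ Conn C ∧ ∀ v ∈ support C, deg C v = 2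

/-- A forest contains no cycle. -/
def IsForest (G : Multiset (Sym2 V)) : Prop := ∀ C ≤ G, ¬ IsCycle C

/-- Delete a set of vertices (removing all incident edges). -/
noncomputable def deleteVerts (G : Multiset (Sym2 V)) (S : Set V) : Multiset (Sym2 V) :=
  G.filter fun e => ∀ v ∈ e, v ∉ S

/-- Minimum size of a feedback vertex set. -/
noncomputable def fvs (G : Multiset (Sym2 V)) : ℕ :=
  sInf {n | ∃ S : Finset V, S.card = n ∧ IsForest (deleteVerts G ↑S)}

/-- `f` is a packing of `n` pairwise vertex-disjoint cycles in `G`. -/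
def IsCyclePackingOn (G : Multiset (Sym2 V)) {n : ℕ} (f : Fin n → Multiset (Sym2 V)) : Prop :=
  (∀ i, f i ≤ G ∧ IsCycle (f i)) ∧
    ∀ i j, i ≠ j → Disjoint (support (f i)) (support (f j))

/-- Maximum size of a cycle packing. -/
noncomputable def cp (G : Multiset (Sym2 V)) : ℕ :=
  sSup {n | ∃ f : Fin n → Multiset (Sym2 V), IsCyclePackingOn G f}

/-- `H` is a minor of the multigraph `G` (branch-set definition). -/
def HasMinor {W : Type*} (G : Multiset (Sym2 V)) (H : SimpleGraph W) : Prop :=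
  ∃ B : W → Set V, (∀ w, (B w).Nonempty) ∧
    (∀ w w', w ≠ w' → Disjoint (B w) (B w')) ∧
    (∀ w, ∀ a ∈ B w, ∀ b ∈ B w,
      Relation.ReflTransGen (fun x y => Adj G x y ∧ x ∈ B w ∧ y ∈ B w) a b) ∧
    (∀ w w', H.Adj w w' → ∃ a ∈ B w, ∃ b ∈ B w', Adj G a b)

/-- Planarity, via Wagner's characterization: no `K₅` minor and no `K₃,₃` minor. -/
def Planar (G : Multiset (Sym2 V)) : Prop :=
  ¬ HasMinor G (SimpleGraph.completeGraph (Fin 5)) ∧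
    ¬ HasMinor G (completeBipartiteGraph (Fin 3) (Fin 3))

/-- All degrees are at most 3. -/
def Subcubic (G : Multiset (Sym2 V)) : Prop := ∀ v, deg G v ≤ 3

/-- `H` is a connected component of `M`. -/
def IsComponent (M H : Multiset (Sym2 V)) : Prop :=
  H ≤ M ∧ Conn H ∧ ∀ e ∈ M - H, ∀ v ∈ e, v ∉ support H

end MG

/-!
If `G` splits into two vertex-disjoint pieces, each on fewer vertices than `G`, such that every
cycle of `G` lies in one of them, then `fvs` is subadditive and `cp` superadditive over the split,
so minimality gives `fvs G ≤ 2 * cp G`. A disconnected `G` splits along a component. For a bridge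
`ab`, split `G - ab` along the component of `a`: no cycle of `G` passes through `ab`, since
removing an edge from a cycle leaves its ends connected (a parity count of degrees over the
component).
-/

namespace MG

variable {V : Type*}

section Basic

lemma support_mono {H G : Multiset (Sym2 V)} (h : H ≤ G) : support H ⊆ support G :=
  fun _ ⟨e, he, hv⟩ => ⟨e, Multiset.mem_of_le h he, hv⟩

lemma support_finite (G : Multiset (Sym2 V)) : (support G).Finite :=
  (G.toFinset.biUnion Sym2.toFinset).finite_toSet.subset fun v ⟨e, he, hv⟩ => by
    simpa using ⟨e, he, hv⟩

lemma left_mem_support {G : Multiset (Sym2 V)} {a b : V} (h : s(a, b) ∈ G) : a ∈ support G :=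
  ⟨_, h, Sym2.mem_mk_left a b⟩

lemma right_mem_support {G : Multiset (Sym2 V)} {a b : V} (h : s(a, b) ∈ G) : b ∈ support G :=
  ⟨_, h, Sym2.mem_mk_right a b⟩

lemma support_nonempty_of_ne_zero {G : Multiset (Sym2 V)} (h : G ≠ 0) : (support G).Nonempty := by
  obtain ⟨e, he⟩ := Multiset.exists_mem_of_ne_zero h
  induction e using Sym2.ind with
  | _ x y => exact ⟨x, left_mem_support he⟩

lemma Adj.symm {G : Multiset (Sym2 V)} {a b : V} (h : Adj G a b) : Adj G b a := by
  rwa [Adj, Sym2.eq_swap]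

lemma Reach.mono {H G : Multiset (Sym2 V)} (h : H ≤ G) {a b : V} (hr : Reach H a b) :
    Reach G a b :=
  Relation.ReflTransGen.mono (fun _ _ => Multiset.mem_of_le h) _ _ hr

lemma le_deleteVerts_iff {C G : Multiset (Sym2 V)} {S : Set V} :
    C ≤ deleteVerts G S ↔ C ≤ G ∧ ∀ e ∈ C, ∀ v ∈ e, v ∉ S :=
  Multiset.le_filter

lemma notMem_of_mem_support_deleteVerts {G : Multiset (Sym2 V)} {S : Set V} {v : V}
    (hv : v ∈ support (deleteVerts G S)) : v ∉ S := by
  obtain ⟨e, he, hve⟩ := hv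
  exact Multiset.of_mem_filter he v hve

end Basic

section Degree

noncomputable def endpointMult (e : Sym2 V) (v : V) : ℕ :=
  if e = s(v, v) then 2 else if v ∈ e then 1 else 0

lemma deg_eq_sum_endpointMult (G : Multiset (Sym2 V)) (v : V) :
    deg G v = (G.map fun e => endpointMult e v).sum := rfl

lemma endpointMult_mk (x y v : V) :
    endpointMult s(x, y) v = (if v = x then 1 else 0) + (if v = y then 1 else 0) := by
  unfold endpointMult
  by_cases hx : v = x <;> by_cases hy : v = y <;> subst_vars <;> simp_all [eq_comm]

lemma deg_cons (e : Sym2 V) (D : Multiset (Sym2 V)) (v : V) :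
    deg (e ::ₘ D) v = endpointMult e v + deg D v := by
  simp only [deg_eq_sum_endpointMult, Multiset.map_cons, Multiset.sum_cons]

lemma deg_mono {H G : Multiset (Sym2 V)} (h : H ≤ G) (v : V) : deg H v ≤ deg G v := by
  obtain ⟨D, rfl⟩ := Multiset.le_iff_exists_add.1 h
  simp only [deg_eq_sum_endpointMult, Multiset.map_add, Multiset.sum_add, Nat.le_add_right]

lemma mem_support_of_deg_ne_zero {G : Multiset (Sym2 V)} {v : V} (h : deg G v ≠ 0) :
    v ∈ support G := by
  by_contra hv
  rw [deg_eq_sum_endpointMult] at h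
  refine h (Multiset.sum_eq_zero fun n hn => ?_)
  obtain ⟨e, he, rfl⟩ := Multiset.mem_map.1 hn
  induction e using Sym2.ind with
  | _ x y =>
    have hx : v ≠ x := fun hx => hv (hx ▸ left_mem_support he)
    have hy : v ≠ y := fun hy => hv (hy ▸ right_mem_support he)
    simp [endpointMult_mk, hx, hy]

/-- Handshake lemma, restricted to a union of components. -/
lemma two_dvd_sum_deg_of_closed (D : Multiset (Sym2 V)) {F : Finset V}
    (hF : ∀ x y, x ∈ F → Adj D x y → y ∈ F) : 2 ∣ ∑ v ∈ F, deg D v := by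
  simp only [deg_eq_sum_endpointMult, ← Multiset.sum_map_sum]
  refine Multiset.dvd_sum fun n hn => ?_
  obtain ⟨e, he, rfl⟩ := Multiset.mem_map.1 hn
  induction e using Sym2.ind with
  | _ x y =>
    simp only [endpointMult_mk, Finset.sum_add_distrib, Finset.sum_ite_eq']
    by_cases hx : x ∈ F
    · simp [hx, hF x y hx he]
    · have hy : y ∉ F := fun hy => hx (hF y x hy (Adj.symm he))
      simp [hx, hy]

end Degree

section Cycles

/-- Removing one edge from a cycle leaves its ends connected: otherwise the degrees of `C - ab`
summed over the component of `a` would be `1 + 2 + ⋯ + 2`, contradicting the handshake lemma. -/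
lemma IsCycle.reach_erase {C : Multiset (Sym2 V)} (hC : IsCycle C) {a b : V}
    (he : s(a, b) ∈ C) : Reach (C.erase s(a, b)) a b := by
  by_cases hab : a = b
  · exact hab ▸ Relation.ReflTransGen.refl
  by_contra hnot
  set D := C.erase s(a, b)
  have hCD : C = s(a, b) ::ₘ D := (Multiset.cons_erase he).symm
  have hdeg : ∀ v, deg D v = deg C v - endpointMult s(a, b) v := fun v => by
    rw [hCD, deg_cons]; omega
  set S : Set V := {v | Reach D a v}
  set F : Finset V := (support_finite D).toFinset.filter (· ∈ S)
  have hmemF : ∀ v, v ∈ F ↔ v ∈ support D ∧ v ∈ S := by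
    simp [F, Set.Finite.mem_toFinset]
  have hdega : deg D a = 1 := by
    rw [hdeg, hC.2.2 a (left_mem_support he), endpointMult_mk]
    simp [hab]
  have haF : a ∈ F := (hmemF a).2 ⟨mem_support_of_deg_ne_zero (by omega), .refl⟩
  have hdegF : ∀ v ∈ F.erase a, deg D v = 2 := by
    intro v hv
    obtain ⟨hvD, hvS⟩ := (hmemF v).1 (Finset.mem_of_mem_erase hv)
    have hvb : v ≠ b := by rintro rfl; exact hnot hvS
    rw [hdeg, hC.2.2 v (support_mono (Multiset.erase_le _ _) hvD), endpointMult_mk]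
    simp [Finset.ne_of_mem_erase hv, hvb]
  have hclosed : ∀ x y, x ∈ F → Adj D x y → y ∈ F := fun x y hx hxy =>
    (hmemF y).2 ⟨right_mem_support hxy, ((hmemF x).1 hx).2.tail hxy⟩
  have hodd : ∑ v ∈ F, deg D v = 2 * (F.erase a).card + 1 := by
    rw [← Finset.add_sum_erase F _ haF, hdega, Finset.sum_congr rfl hdegF, Finset.sum_const,
      smul_eq_mul]
    ring
  have heven := two_dvd_sum_deg_of_closed D hclosed
  omega

lemma IsCycle.le_erase_of_not_reach {C G : Multiset (Sym2 V)} (hC : IsCycle C) (hCG : C ≤ G)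
    {a b : V} (hab : ¬ Reach (G.erase s(a, b)) a b) : C ≤ G.erase s(a, b) := by
  have heC : s(a, b) ∉ C := fun heC =>
    hab ((hC.reach_erase heC).mono (Multiset.erase_le_erase _ hCG))
  rw [Multiset.le_iff_count]
  intro x
  by_cases hx : x = s(a, b)
  · simp [hx, Multiset.count_eq_zero.2 heC]
  · rw [Multiset.count_erase_of_ne hx]
    exact Multiset.le_iff_count.1 hCG x

/-- `deleteVerts G Sᶜ` and `deleteVerts G S` are the parts of `G` inside and outside `S`. -/
lemma Conn.le_deleteVerts_or {C G : Multiset (Sym2 V)} (hC : Conn C) (hCG : C ≤ G) {S : Set V}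
    (hS : ∀ x y, x ∈ S → Adj G x y → y ∈ S) :
    C ≤ deleteVerts G Sᶜ ∨ C ≤ deleteVerts G S := by
  simp only [le_deleteVerts_iff, hCG, true_and, Set.mem_compl_iff, not_not]
  by_cases hex : ∃ x ∈ support C, x ∈ S
  · obtain ⟨x, hxC, hxS⟩ := hex
    have hreachS : ∀ y, Reach G x y → y ∈ S := fun y hr => by
      induction hr with
      | refl => exact hxS
      | tail _ hadj ih => exact hS _ _ ih hadj
    exact Or.inl fun e he v hv => hreachS v ((hC.2 x hxC v ⟨e, he, hv⟩).mono hCG)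
  · push Not at hex
    exact Or.inr fun e he v hv => hex v ⟨e, he, hv⟩

end Cycles

section Invariants

lemma isForest_zero : IsForest (0 : Multiset (Sym2 V)) :=
  fun _ hC hcyc => hcyc.1 (Multiset.le_zero.1 hC)

lemma deleteVerts_support (G : Multiset (Sym2 V)) : deleteVerts G (support G) = 0 :=
  Multiset.filter_eq_nil.2 fun e he h => by
    induction e using Sym2.ind with
    | _ x y => exact h x (Sym2.mem_mk_left x y) (left_mem_support he)

lemma fvs_spec (G : Multiset (Sym2 V)) :
    ∃ S : Finset V, S.card = fvs G ∧ IsForest (deleteVerts G ↑S) := by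
  have hforest : IsForest (deleteVerts G ↑(support_finite G).toFinset) := by
    rw [Set.Finite.coe_toFinset, deleteVerts_support]
    exact isForest_zero
  exact Nat.sInf_mem (s := {n | ∃ S : Finset V, S.card = n ∧ IsForest (deleteVerts G ↑S)})
    ⟨_, _, rfl, hforest⟩

lemma fvs_le_card {G : Multiset (Sym2 V)} {S : Finset V} (h : IsForest (deleteVerts G ↑S)) :
    fvs G ≤ S.card :=
  Nat.sInf_le ⟨S, rfl, h⟩

lemma fvs_zero : fvs (0 : Multiset (Sym2 V)) = 0 :=
  Nat.le_zero.1 (fvs_le_card (S := ∅) isForest_zero)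

lemma fvs_le_fvs_add_fvs {G G₁ G₂ : Multiset (Sym2 V)}
    (hsplit : ∀ C ≤ G, IsCycle C → C ≤ G₁ ∨ C ≤ G₂) :
    fvs G ≤ fvs G₁ + fvs G₂ := by
  obtain ⟨S₁, hS₁, hF₁⟩ := fvs_spec G₁
  obtain ⟨S₂, hS₂, hF₂⟩ := fvs_spec G₂
  have hforest : IsForest (deleteVerts G ↑(S₁ ∪ S₂)) := by
    intro C hCle hcyc
    obtain ⟨hCG, havoid⟩ := le_deleteVerts_iff.1 hCle
    have havoid₁ : ∀ e ∈ C, ∀ v ∈ e, v ∉ (S₁ : Set V) := fun e he v hv hvS =>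
      havoid e he v hv (by simp [hvS])
    have havoid₂ : ∀ e ∈ C, ∀ v ∈ e, v ∉ (S₂ : Set V) := fun e he v hv hvS =>
      havoid e he v hv (by simp [hvS])
    rcases hsplit C hCG hcyc with h | h
    · exact hF₁ C (le_deleteVerts_iff.2 ⟨h, havoid₁⟩) hcyc
    · exact hF₂ C (le_deleteVerts_iff.2 ⟨h, havoid₂⟩) hcyc
  calc fvs G ≤ (S₁ ∪ S₂).card := fvs_le_card hforest
    _ ≤ S₁.card + S₂.card := Finset.card_union_le _ _
    _ = fvs G₁ + fvs G₂ := by rw [hS₁, hS₂]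

/-- The cycles of a packing are vertex-disjoint, so choosing an edge of each is injective. -/
lemma cp_bddAbove (G : Multiset (Sym2 V)) :
    BddAbove {n | ∃ f : Fin n → Multiset (Sym2 V), IsCyclePackingOn G f} := by
  refine ⟨G.toFinset.card, ?_⟩
  rintro n ⟨f, hf, hdisj⟩
  choose g hg using fun i => Multiset.exists_mem_of_ne_zero (hf i).2.1
  have hinj : Function.Injective g := by
    intro i j hij
    by_contra hne
    induction h : g i using Sym2.ind with
    | _ x y =>
      have hx : x ∈ support (f i) := ⟨g i, hg i, h ▸ Sym2.mem_mk_left x y⟩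
      have hx' : x ∈ support (f j) := ⟨g j, hg j, hij ▸ h ▸ Sym2.mem_mk_left x y⟩
      exact Set.disjoint_left.1 (hdisj i j hne) hx hx'
  simpa using Finset.card_le_card_of_injOn (s := Finset.univ) g
    (fun i _ => Multiset.mem_toFinset.2 (Multiset.mem_of_le (hf i).1 (hg i))) hinj.injOn

lemma cp_spec (G : Multiset (Sym2 V)) :
    ∃ f : Fin (cp G) → Multiset (Sym2 V), IsCyclePackingOn G f :=
  Nat.sSup_mem (by exact ⟨0, Fin.elim0, fun i => i.elim0, fun i => i.elim0⟩) (cp_bddAbove G)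

lemma le_cp {G : Multiset (Sym2 V)} {n : ℕ} {f : Fin n → Multiset (Sym2 V)}
    (h : IsCyclePackingOn G f) : n ≤ cp G :=
  le_csSup (cp_bddAbove G) ⟨f, h⟩

lemma cp_add_cp_le {G G₁ G₂ : Multiset (Sym2 V)} (h₁ : G₁ ≤ G) (h₂ : G₂ ≤ G)
    (hd : Disjoint (support G₁) (support G₂)) :
    cp G₁ + cp G₂ ≤ cp G := by
  obtain ⟨f₁, hf₁, hd₁⟩ := cp_spec G₁
  obtain ⟨f₂, hf₂, hd₂⟩ := cp_spec G₂
  have hd₁₂ : ∀ i j, Disjoint (support (f₁ i)) (support (f₂ j)) := fun i j =>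
    hd.mono (support_mono (hf₁ i).1) (support_mono (hf₂ j).1)
  refine le_cp (f := Fin.append f₁ f₂) ⟨fun i => ?_, fun i j hij => ?_⟩
  · refine Fin.addCases (fun i => ?_) (fun i => ?_) i
    · simpa using ⟨(hf₁ i).1.trans h₁, (hf₁ i).2⟩
    · simpa using ⟨(hf₂ i).1.trans h₂, (hf₂ i).2⟩
  · induction i using Fin.addCases <;> induction j using Fin.addCases <;>
      simp only [Fin.append_left, Fin.append_right]
    · exact hd₁ _ _ fun h => hij (h ▸ rfl)
    · exact hd₁₂ _ _
    · exact (hd₁₂ _ _).symm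
    · exact hd₂ _ _ fun h => hij (h ▸ rfl)

end Invariants

section Minors

lemma HasMinor.mono {W : Type*} {K : SimpleGraph W} {H G : Multiset (Sym2 V)} (h : H ≤ G) :
    HasMinor H K → HasMinor G K := by
  rintro ⟨B, hne, hdisj, hconn, hadj⟩
  refine ⟨B, hne, hdisj, fun w a ha b hb => Relation.ReflTransGen.mono ?_ _ _ (hconn w a ha b hb),
    fun w w' hww' => ?_⟩
  · exact fun x y ⟨hxy, hx, hy⟩ => ⟨Multiset.mem_of_le h hxy, hx, hy⟩
  · obtain ⟨a, ha, b, hb, hab⟩ := hadj w w' hww'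
    exact ⟨a, ha, b, hb, Multiset.mem_of_le h hab⟩

lemma Planar.mono {H G : Multiset (Sym2 V)} (h : H ≤ G) (hp : Planar G) : Planar H :=
  ⟨fun hm => hp.1 (hm.mono h), fun hm => hp.2 (hm.mono h)⟩

lemma Subcubic.mono {H G : Multiset (Sym2 V)} (h : H ≤ G) (hs : Subcubic G) : Subcubic H :=
  fun v => (deg_mono h v).trans (hs v)

end Minors

section Counterexample

variable {G : Multiset (Sym2 V)}

lemma fvs_le_two_mul_cp_of_split (hsub : Subcubic G) (hplanar : Planar G)
    (hmin : ∀ H : Multiset (Sym2 V), Subcubic H → Planar H →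
      (support H).ncard < (support G).ncard → fvs H ≤ 2 * cp H)
    {G₁ G₂ : Multiset (Sym2 V)} (h₁ : G₁ ≤ G) (h₂ : G₂ ≤ G)
    (hdisj : Disjoint (support G₁) (support G₂))
    (hsplit : ∀ C ≤ G, IsCycle C → C ≤ G₁ ∨ C ≤ G₂)
    (hlt₁ : (support G₁).ncard < (support G).ncard)
    (hlt₂ : (support G₂).ncard < (support G).ncard) :
    fvs G ≤ 2 * cp G := by
  have hfvs₁ := hmin G₁ (hsub.mono h₁) (hplanar.mono h₁) hlt₁
  have hfvs₂ := hmin G₂ (hsub.mono h₂) (hplanar.mono h₂) hlt₂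
  have hfvs := fvs_le_fvs_add_fvs hsplit
  have hcp := cp_add_cp_le h₁ h₂ hdisj
  omega

/-- Otherwise the component of `a` in `G'` and the rest of `G'` would split `G`. -/
lemma reach_of_minimal_counterexample (hsub : Subcubic G) (hplanar : Planar G)
    (hcex : 2 * cp G < fvs G)
    (hmin : ∀ H : Multiset (Sym2 V), Subcubic H → Planar H →
      (support H).ncard < (support G).ncard → fvs H ≤ 2 * cp H)
    {G' : Multiset (Sym2 V)} (hG' : G' ≤ G) (hcycles : ∀ C ≤ G, IsCycle C → C ≤ G')
    {a b : V} (ha : a ∈ support G) (hb : b ∈ support G) : Reach G' a b := by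
  by_contra hab
  set S : Set V := {v | Reach G' a v}
  have hS : ∀ x y, x ∈ S → Adj G' x y → y ∈ S := fun _ _ hx hxy =>
    Relation.ReflTransGen.tail hx hxy
  have h₁ : deleteVerts G' Sᶜ ≤ G := (Multiset.filter_le _ _).trans hG'
  have h₂ : deleteVerts G' S ≤ G := (Multiset.filter_le _ _).trans hG'
  have hdisj : Disjoint (support (deleteVerts G' Sᶜ)) (support (deleteVerts G' S)) :=
    Set.disjoint_left.2 fun _ hv₁ hv₂ =>
      notMem_of_mem_support_deleteVerts hv₂ (not_not.1 (notMem_of_mem_support_deleteVerts hv₁))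
  have hsplit : ∀ C ≤ G, IsCycle C → C ≤ deleteVerts G' Sᶜ ∨ C ≤ deleteVerts G' S :=
    fun C hC hcyc => hcyc.2.1.le_deleteVerts_or (hcycles C hC hcyc) hS
  have hlt₁ : (support (deleteVerts G' Sᶜ)).ncard < (support G).ncard :=
    Set.ncard_lt_ncard ((Set.ssubset_iff_of_subset (support_mono h₁)).2
      ⟨b, hb, fun hb₁ => notMem_of_mem_support_deleteVerts hb₁ hab⟩) (support_finite G)
  have hlt₂ : (support (deleteVerts G' S)).ncard < (support G).ncard :=
    Set.ncard_lt_ncard ((Set.ssubset_iff_of_subset (support_mono h₂)).2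
      ⟨a, ha, fun ha₂ => notMem_of_mem_support_deleteVerts ha₂ .refl⟩) (support_finite G)
  have := fvs_le_two_mul_cp_of_split hsub hplanar hmin h₁ h₂ hdisj hsplit hlt₁ hlt₂
  omega

end Counterexample

end MG

/-- A minimum-vertex counterexample to `fvs ≤ 2 * cp` among subcubic planar
multigraphs is 2-edge-connected: it is connected and has no bridge. -/
theorem min_counterexample_two_edge_connected {V : Type*} (G : Multiset (Sym2 V))
    (hsub : MG.Subcubic G) (hplanar : MG.Planar G)
    (hcex : 2 * MG.cp G < MG.fvs G)
    (hmin : ∀ H : Multiset (Sym2 V), MG.Subcubic H → MG.Planar H →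
      (MG.support H).ncard < (MG.support G).ncard → MG.fvs H ≤ 2 * MG.cp H) :
    MG.Conn G ∧ ∀ a b : V, s(a, b) ∈ G → MG.Reach (G.erase s(a, b)) a b := by
  have hreach := @MG.reach_of_minimal_counterexample V G hsub hplanar hcex hmin
  have hG : G ≠ 0 := by
    rintro rfl
    simp [MG.fvs_zero] at hcex
  refine ⟨⟨MG.support_nonempty_of_ne_zero hG, fun a ha b hb =>
    hreach le_rfl (fun C hC _ => hC) ha hb⟩, fun a b hab => ?_⟩
  by_contra hbridge
  exact hbridge (hreach (Multiset.erase_le _ _)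
    (fun C hC hcyc => hcyc.le_erase_of_not_reach hC hbridge)
    (MG.left_mem_support hab) (MG.right_mem_support hab))
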